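/- Let t and d be positive integers and let w^1, …, w^t ∈ ℝ^d. Define f : Δ_t → ℝ by f(x) = ‖ Σ_{i=1}^t x_i w^i ‖_2. Then f is 2-anti-concentrated: for every c ∈ (0,1), the uniform measure μ_t of the set { x ∈ Δ_t : f(x) < c · max_{z ∈ Δ_t} f(z) } is at most 2 t c. -/

import Mathlib

open MeasureTheory

noncomputable section

/-- The standard simplex `Δ_d = {x ∈ ℝ^d : ∑ x_i = 1, x ≥ 0}` inside Euclidean space. -/
def stdSimplexE (d : ℕ) : Set (EuclideanSpace ℝ (Fin d)) :=
  {x | (∀ i, 0 ≤ x i) ∧ ∑ i, x i = 1}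

/-- The uniform probability measure `μ_d` on the standard simplex: the `(d-1)`-dimensional
Hausdorff measure restricted to the simplex and normalized to total mass one. -/
def simplexUniform (d : ℕ) : Measure (EuclideanSpace ℝ (Fin d)) :=
  (μH[(d : ℝ) - 1] (stdSimplexE d))⁻¹ • (μH[(d : ℝ) - 1]).restrict (stdSimplexE d)

/-
Write `L x = ∑ xᵢ wⁱ`, let `z` maximise `‖L ·‖` on the simplex, `M = ‖L z‖`, and let `B` be
the set of points of the simplex where `‖L x‖ < c M`. For `k < ⌈1/(2c)⌉` the homothety of ratio
`1 - 2ck` centred at `z` maps `B` into the simplex, onto a set on which `‖L ·‖` stays within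
`c M` of `2ck M`; so these images are pairwise disjoint. In dimension `t - 1` the `k`-th image
has measure `(1 - 2ck)^(t-1) μ(B)`, and `∑_k (1 - 2ck)^(t-1) ≥ 1/(2ct)`, a Riemann sum of
`∫₀¹ (1 - x)^(t-1) dx = 1/t`.
-/

open Finset AffineMap

theorem mul_lt_one_of_lt_ceil_inv {h : ℝ} (hh : 0 < h) {k : ℕ} (hk : k < ⌈h⁻¹⌉₊) :
    h * k < 1 := by
  have := Nat.lt_ceil.1 hk
  rwa [← one_div, lt_div_iff₀' hh] at this

theorem pow_succ_sub_pow_succ_le {a b : ℝ} (hb : 0 ≤ b) (hba : b ≤ a) (n : ℕ) :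
    a ^ (n + 1) - b ^ (n + 1) ≤ (a - b) * (n + 1) * a ^ n := by
  have h := abs_pow_sub_pow_le a b (n + 1)
  rwa [abs_of_nonneg (sub_nonneg.2 (pow_le_pow_left₀ hb hba _)), abs_of_nonneg (sub_nonneg.2 hba),
    abs_of_nonneg hb, abs_of_nonneg (hb.trans hba), max_eq_left hba, Nat.cast_succ,
    Nat.add_sub_cancel] at h

theorem one_le_mul_sum_pow_one_sub_mul {h : ℝ} (hh : 0 < h) (n : ℕ) :
    1 ≤ h * (n + 1) * ∑ k ∈ range ⌈h⁻¹⌉₊, (1 - h * k) ^ n := by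
  set b : ℕ → ℝ := fun k => max (1 - h * k) 0
  have hb_of_lt : ∀ k < ⌈h⁻¹⌉₊, b k = 1 - h * k := fun k hk =>
    max_eq_left (by linarith [mul_lt_one_of_lt_ceil_inv hh hk])
  have telescope : ∑ k ∈ range ⌈h⁻¹⌉₊, (b k ^ (n + 1) - b (k + 1) ^ (n + 1)) = 1 := by
    have hb_ceil : b ⌈h⁻¹⌉₊ = 0 := by
      have := (inv_le_iff_one_le_mul₀' hh).1 (Nat.le_ceil h⁻¹)
      exact max_eq_right (by linarith)
    rw [sum_range_sub' (fun k => b k ^ (n + 1)), hb_ceil]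
    simp [b]
  calc 1 = ∑ k ∈ range ⌈h⁻¹⌉₊, (b k ^ (n + 1) - b (k + 1) ^ (n + 1)) := telescope.symm
    _ ≤ ∑ k ∈ range ⌈h⁻¹⌉₊, h * (n + 1) * (1 - h * k) ^ n := by
      refine sum_le_sum fun k hk => ?_
      have hbk := hb_of_lt k (mem_range.1 hk)
      have hsucc : b (k + 1) ≤ b k := max_le_max_right _ (by push_cast; linarith)
      have hgap : b k - b (k + 1) ≤ h := by
        have : 1 - h * (k + 1 : ℕ) ≤ b (k + 1) := le_max_left _ _
        push_cast at this
        linarith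
      calc b k ^ (n + 1) - b (k + 1) ^ (n + 1) ≤ (b k - b (k + 1)) * (n + 1) * b k ^ n :=
            pow_succ_sub_pow_succ_le (le_max_right _ _) hsucc n
        _ ≤ h * (n + 1) * (1 - h * k) ^ n := by
            rw [← hbk]
            gcongr
    _ = h * (n + 1) * ∑ k ∈ range ⌈h⁻¹⌉₊, (1 - h * k) ^ n := (mul_sum _ _ _).symm

section Homothety

variable {E F : Type*} [NormedAddCommGroup E] [NormedSpace ℝ E]
  [NormedAddCommGroup F] [NormedSpace ℝ F]

theorem abs_norm_map_homothety_sub_le (L : E →ₗ[ℝ] F) (z x : E) {r : ℝ} (hr₀ : 0 ≤ r)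
    (hr₁ : r ≤ 1) :
    |‖L (homothety z r x)‖ - (1 - r) * ‖L z‖| ≤ r * ‖L x‖ := by
  have hLhom : L (homothety z r x) = r • L x + (1 - r) • L z := by
    simp only [homothety_apply, vsub_eq_sub, vadd_eq_add, map_add, map_smul, map_sub, sub_smul,
      one_smul, smul_sub]
    abel
  have hnorm_smul : ∀ {a : ℝ}, 0 ≤ a → ∀ v : F, ‖a • v‖ = a * ‖v‖ := fun ha v => by
    rw [norm_smul, Real.norm_of_nonneg ha]
  simpa only [hLhom, hnorm_smul hr₀, hnorm_smul (sub_nonneg.2 hr₁), add_sub_cancel_right] using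
    abs_norm_sub_norm_le (r • L x + (1 - r) • L z) ((1 - r) • L z)

theorem disjoint_homothety_image_norm_lt (L : E →ₗ[ℝ] F) (z : E) {c : ℝ} (hc : 0 < c) {j k : ℕ}
    (hj : 2 * c * j ≤ 1) (hk : 2 * c * k ≤ 1) (hjk : j ≠ k) :
    Disjoint (homothety z (1 - 2 * c * j) '' {x | ‖L x‖ < c * ‖L z‖})
      (homothety z (1 - 2 * c * k) '' {x | ‖L x‖ < c * ‖L z‖}) := by
  have band : ∀ k : ℕ, 2 * c * k ≤ 1 → ∀ x, ‖L x‖ < c * ‖L z‖ →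
      |‖L (homothety z (1 - 2 * c * k) x)‖ - 2 * c * k * ‖L z‖| < c * ‖L z‖ := fun k hk x hx => by
    have := abs_norm_map_homothety_sub_le L z x (sub_nonneg.2 hk) (sub_le_self _ (by positivity))
    rw [sub_sub_cancel] at this
    linarith [mul_nonneg (by positivity : (0 : ℝ) ≤ 2 * c * k) (norm_nonneg (L x))]
  rw [Set.disjoint_left]
  rintro _ ⟨x, hx, rfl⟩ ⟨y, hy, hxy⟩
  have hj' := band j hj x hx
  have hk' := band k hk y hy
  rw [hxy] at hk'
  have hcM : 0 < c * ‖L z‖ := (abs_nonneg _).trans_lt hj'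
  rw [abs_sub_lt_iff] at hj' hk'
  have hjk' : (j : ℝ) < k + 1 ∧ (k : ℝ) < j + 1 := by
    constructor <;> nlinarith
  have : j < k + 1 ∧ k < j + 1 := by exact_mod_cast hjk'
  omega

variable [MeasurableSpace E] [BorelSpace E]

theorem sum_ofReal_rpow_mul_hausdorffMeasure_le {ι : Type*} (I : Finset ι) {d : ℝ} (hd : 0 ≤ d)
    {s B : Set E} {z : E} (hs : Convex ℝ s) (hz : z ∈ s) (hBs : B ⊆ s) (hB : MeasurableSet B)
    {r : ι → ℝ} (hr : ∀ i ∈ I, r i ∈ Set.Ioc 0 1)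
    (hdisj : (I : Set ι).PairwiseDisjoint fun i => homothety z (r i) '' B) :
    (∑ i ∈ I, ENNReal.ofReal (r i ^ d)) * μH[d] B ≤ μH[d] s := by
  have hmeas : ∀ i ∈ I, MeasurableSet (homothety z (r i) '' B) := fun i hi => by
    have hri : r i ≠ 0 := (hr i hi).1.ne'
    rw [Set.image_eq_preimage_of_inverse (f := homothety z (r i)) (g := homothety z (r i)⁻¹)]
    · exact hB.preimage (homothety_continuous _ _).measurable
    · intro x; rw [← homothety_mul_apply, inv_mul_cancel₀ hri, homothety_one, id_apply]
    · intro x; rw [← homothety_mul_apply, mul_inv_cancel₀ hri, homothety_one, id_apply]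
  calc (∑ i ∈ I, ENNReal.ofReal (r i ^ d)) * μH[d] B
      = ∑ i ∈ I, μH[d] (homothety z (r i) '' B) := by
        rw [sum_mul]
        refine sum_congr rfl fun i hi => ?_
        have hri := (hr i hi).1.le
        rw [hausdorffMeasure_homothety_image hd z (hr i hi).1.ne', ENNReal.smul_def, smul_eq_mul,
          Real.nnnorm_of_nonneg hri, ENNReal.ofReal, Real.toNNReal_rpow_of_nonneg hri,
          Real.toNNReal_of_nonneg hri]
    _ = μH[d] (⋃ i ∈ I, homothety z (r i) '' B) := (measure_biUnion_finset hdisj hmeas).symm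
    _ ≤ μH[d] s := measure_mono <| Set.iUnion₂_subset fun i hi => Set.image_subset_iff.2
        fun x hx => by
          rw [Set.mem_preimage, homothety_eq_lineMap]
          exact hs.lineMap_mem hz (hBs hx) ⟨(hr i hi).1.le, (hr i hi).2⟩

theorem hausdorffMeasure_norm_lt_mul_sSup_le {s : Set E} (hs : Convex ℝ s) (hsc : IsCompact s)
    (L : E →L[ℝ] F) (n : ℕ) {c : ℝ} (hc : 0 < c) :
    μH[n] ({x | ‖L x‖ < c * sSup ((fun x => ‖L x‖) '' s)} ∩ s) ≤
      ENNReal.ofReal (2 * (n + 1) * c) * μH[n] s := by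
  rcases s.eq_empty_or_nonempty with rfl | hne
  · simp
  obtain ⟨z, hzs, hzmax⟩ := hsc.exists_isMaxOn hne L.continuous.norm.continuousOn
  have hsSup : sSup ((fun x => ‖L x‖) '' s) = ‖L z‖ :=
    IsGreatest.csSup_eq ⟨Set.mem_image_of_mem _ hzs, Set.forall_mem_image.2 fun _ hx => hzmax hx⟩
  rw [hsSup]
  set B := {x | ‖L x‖ < c * ‖L z‖} ∩ s
  have hB : MeasurableSet B :=
    (isOpen_lt (by fun_prop) continuous_const).measurableSet.inter hsc.isClosed.measurableSet
  have hr : ∀ k ∈ range ⌈(2 * c)⁻¹⌉₊, 1 - 2 * c * k ∈ Set.Ioc (0 : ℝ) 1 := fun k hk =>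
    ⟨sub_pos.2 (mul_lt_one_of_lt_ceil_inv (by positivity) (mem_range.1 hk)),
      sub_le_self _ (by positivity)⟩
  set S := ∑ k ∈ range ⌈(2 * c)⁻¹⌉₊, (1 - 2 * c * k) ^ n
  have hS : 1 ≤ 2 * c * (n + 1) * S := one_le_mul_sum_pow_one_sub_mul (by positivity) n
  have hpacking : ENNReal.ofReal S * μH[n] B ≤ μH[n] s := by
    rw [ENNReal.ofReal_sum_of_nonneg fun k hk => pow_nonneg (hr k hk).1.le n]
    simpa only [Real.rpow_natCast] using
      sum_ofReal_rpow_mul_hausdorffMeasure_le _ n.cast_nonneg hs hzs Set.inter_subset_right hB hr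
        fun j hj k hk hjk => (disjoint_homothety_image_norm_lt L.toLinearMap z hc
          (by linarith [(hr j hj).1]) (by linarith [(hr k hk).1]) hjk).mono
          (Set.image_mono Set.inter_subset_left) (Set.image_mono Set.inter_subset_left)
  calc μH[n] B ≤ ENNReal.ofReal (2 * (n + 1) * c * S) * μH[n] B :=
        le_mul_of_one_le_left' (ENNReal.one_le_ofReal.2 (by linarith))
    _ = ENNReal.ofReal (2 * (n + 1) * c) * (ENNReal.ofReal S * μH[n] B) := by
        rw [ENNReal.ofReal_mul (by positivity), mul_assoc]
    _ ≤ ENNReal.ofReal (2 * (n + 1) * c) * μH[n] s := by gcongr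

end Homothety

theorem convex_stdSimplexE (t : ℕ) : Convex ℝ (stdSimplexE t) :=
  (convex_stdSimplex ℝ (Fin t)).linear_preimage (WithLp.linearEquiv 2 ℝ (Fin t → ℝ)).toLinearMap

theorem isCompact_stdSimplexE (t : ℕ) : IsCompact (stdSimplexE t) := by
  have h := (isCompact_stdSimplex ℝ (Fin t)).image (PiLp.continuous_toLp 2 fun _ : Fin t => ℝ)
  rwa [← WithLp.equiv_symm_apply, Equiv.image_eq_preimage_symm] at h

theorem distance_function_anti_concentrated_general
    (t d : ℕ) (ht : 0 < t)
    (w : Fin t → EuclideanSpace ℝ (Fin d))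
    (c : ℝ) (hc : c ∈ Set.Ioo (0 : ℝ) 1) :
    simplexUniform t
        {x | ‖∑ i, x i • w i‖ <
          c * sSup ((fun x : EuclideanSpace ℝ (Fin t) => ‖∑ i, x i • w i‖) '' stdSimplexE t)} ≤
      ENNReal.ofReal (2 * t * c) := by
  obtain ⟨n, rfl⟩ : ∃ n, t = n + 1 := ⟨t - 1, by omega⟩
  set L : EuclideanSpace ℝ (Fin (n + 1)) →L[ℝ] EuclideanSpace ℝ (Fin d) :=
    ∑ i, (EuclideanSpace.proj i).smulRight (w i)
  have hL : ∀ x, ∑ i, x i • w i = L x := fun x => by simp [L]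
  have hdim : ((n + 1 : ℕ) : ℝ) - 1 = n := by push_cast; ring
  simp only [hL]
  rw [simplexUniform, hdim, Measure.smul_apply, smul_eq_mul,
    Measure.restrict_apply' (isCompact_stdSimplexE _).isClosed.measurableSet]
  calc _ ≤ (μH[n] (stdSimplexE (n + 1)))⁻¹ *
        (ENNReal.ofReal (2 * (n + 1) * c) * μH[n] (stdSimplexE (n + 1))) := by
        gcongr
        exact hausdorffMeasure_norm_lt_mul_sSup_le (convex_stdSimplexE _) (isCompact_stdSimplexE _)
          L n hc.1
    _ ≤ ENNReal.ofReal (2 * ↑(n + 1) * c) := by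
        -- `a⁻¹ * a ≤ 1` holds in `ℝ≥0∞` also for `a = 0` and `a = ⊤`
        rw [mul_left_comm]
        push_cast
        exact mul_le_of_le_one_right' (ENNReal.inv_mul_le_one _)

/-- **2-anti-concentration of the distance function** (Fact 4.3): for vectors
`w^1, …, w^t ∈ ℝ^d`, the function `f(x) = ‖∑ x_i w^i‖₂` on `Δ_t` satisfies
`μ_t {x : f x < c · max_{Δ_t} f} ≤ 2 t c` for every `c ∈ (0,1)`. -/
theorem distance_function_anti_concentrated
    (t d : ℕ) (ht : 0 < t) (hd : 0 < d)
    (w : Fin t → EuclideanSpace ℝ (Fin d))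
    (c : ℝ) (hc : c ∈ Set.Ioo (0 : ℝ) 1) :
    simplexUniform t
        {x | ‖∑ i, x i • w i‖ <
          c * sSup ((fun x : EuclideanSpace ℝ (Fin t) => ‖∑ i, x i • w i‖) '' stdSimplexE t)} ≤
      ENNReal.ofReal (2 * t * c) :=
  distance_function_anti_concentrated_general t d ht w c hc

end
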